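/- Let B be a positive natural number, let w : Fin B → ℝ take values in {0, 1} (the true bits), and let ŵ : Fin B → ℝ take values in [0, 1] (the soft decoded bits). Define the soft accuracy Acc_s = (1/B)·∑_b (1 − (ŵ_b − w_b)²), call bit b 'hard-correct' if |ŵ_b − w_b| < 1/2, and let ā = (number of hard-correct bits)/B be the hard-bit accuracy. If Acc_s ≥ τ for some real τ, then ā ≥ 4τ − 3. -/

import Mathlib

/-!
A bit decoded incorrectly has error at least `1/2`, hence squared error at least `1/4`, so by
Chebyshev's counting bound the number of such bits is at most `4 ∑ b, (ŵ b - w b)²`, which the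
hypothesis bounds by `4 B (1 - τ)`.
-/

open scoped Classical

open Finset in
theorem sq_mul_card_filter_le_abs_le_sum_sq {ι : Type*} (s : Finset ι) (f : ι → ℝ) {c : ℝ}
    (hc : 0 ≤ c) : c ^ 2 * #{i ∈ s | c ≤ |f i|} ≤ ∑ i ∈ s, f i ^ 2 :=
  calc c ^ 2 * #{i ∈ s | c ≤ |f i|}
      ≤ ∑ i ∈ s with c ≤ |f i|, f i ^ 2 := by
        rw [mul_comm, ← nsmul_eq_mul]
        refine card_nsmul_le_sum _ _ _ fun i hi ↦ ?_
        rw [← sq_abs (f i)]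
        exact pow_le_pow_left₀ hc (mem_filter.mp hi).2 2
    _ ≤ ∑ i ∈ s, f i ^ 2 :=
        sum_le_sum_of_subset_of_nonneg (filter_subset _ _) fun i _ _ ↦ sq_nonneg (f i)

theorem soft_to_hard_calibration_general (B : ℕ)
    (w what : Fin B → ℝ)
    (τ : ℝ)
    (hAcc : τ ≤ (1 / (B : ℝ)) * ∑ b, (1 - (what b - w b) ^ 2)) :
    4 * τ - 3 ≤
      ((Finset.univ.filter fun b : Fin B => |what b - w b| < 1 / 2).card : ℝ) / B := by
  rcases Nat.eq_zero_or_pos B with rfl | hB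
  · simp only [CharP.cast_eq_zero, div_zero, zero_mul] at hAcc ⊢
    linarith
  set e : Fin B → ℝ := fun b ↦ what b - w b
  have hbad := sq_mul_card_filter_le_abs_le_sum_sq Finset.univ e (c := 1 / 2) (by norm_num)
  have hsplit := congrArg (Nat.cast : ℕ → ℝ) <|
    Finset.card_filter_add_card_filter_not (s := Finset.univ) fun b ↦ |e b| < 1 / 2
  simp only [not_lt, Finset.card_univ, Fintype.card_fin, Nat.cast_add] at hsplit
  have hsum : ∑ b, (1 - e b ^ 2) = B - ∑ b, e b ^ 2 := by
    simp [Finset.sum_sub_distrib]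
  have hBpos : (0 : ℝ) < B := by exact_mod_cast hB
  rw [hsum, one_div, inv_mul_eq_div, le_div_iff₀ hBpos] at hAcc
  rw [le_div_iff₀ hBpos]
  linarith

/-- **Soft-to-hard calibration.**
Let `w : Fin B → ℝ` be true bits in `{0,1}` and `what : Fin B → ℝ` soft bits in
`[0,1]`, with `B > 0`. Let the soft accuracy be
`Acc_s = (1/B) * ∑ b, (1 - (what b - w b)²)` and let
`ā = #{b : |what b - w b| < 1/2} / B` be the hard-bit accuracy. If `Acc_s ≥ τ`
then `ā ≥ 4τ - 3`. -/
theorem soft_to_hard_calibration (B : ℕ) (hB : 0 < B)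
    (w what : Fin B → ℝ)
    (hw : ∀ b, w b = 0 ∨ w b = 1)
    (hwhat : ∀ b, what b ∈ Set.Icc (0 : ℝ) 1)
    (τ : ℝ)
    (hAcc : τ ≤ (1 / (B : ℝ)) * ∑ b, (1 - (what b - w b) ^ 2)) :
    4 * τ - 3 ≤
      ((Finset.univ.filter fun b : Fin B => |what b - w b| < 1 / 2).card : ℝ) / B :=
  soft_to_hard_calibration_general B w what τ hAcc
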